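/- arXiv:1308.2368 — 3 statements merged into one kernel-verified Lean document; each statement's English description precedes it below -/
import Mathlib

section
/- Let G be a graph and S_1 = {a_1,...,a_n}, S_2 = {b_1,...,b_n} be disjoint subsets of V(G) such that in the complement of G the only edges between S_1 and S_2 are the edges a_i b_i for i = 1,...,n. Then box(G) ≥ ⌈n/2⌉. -/
open SimpleGraph

/-- `G` has a representation by axis-parallel boxes in `ℝ^k`: distinct vertices are
adjacent iff their boxes intersect. -/
def HasBoxRep {V : Type*} (G : SimpleGraph V) (k : ℕ) : Prop :=
  ∃ lo hi : V → Fin k → ℝ,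
    ∀ u v : V, u ≠ v →
      (G.Adj u v ↔ ∀ i, max (lo u i) (lo v i) ≤ min (hi u i) (hi v i))

/-- The boxicity of a graph: the least `k` such that `G` has a box representation
in `ℝ^k` (0 for complete graphs). -/
noncomputable def boxicity {V : Type*} (G : SimpleGraph V) : ℕ :=
  sInf {k | HasBoxRep G k}

/-- An interval graph: an intersection graph of closed intervals on the real line. -/
def IsIntervalGraph {V : Type*} (G : SimpleGraph V) : Prop := HasBoxRep G 1

/-- A cointerval graph: the complement is an interval graph. -/
def Cointerval {V : Type*} (G : SimpleGraph V) : Prop := IsIntervalGraph Gᶜ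

/-- The generalized Mycielski graph `M_r(G)`: vertex `none` is the apex `z`,
`some (v, i)` is the copy `v_{i+1}` of `v` in level `i`.  Level `0` induces a copy of `G`,
consecutive levels are joined by `u_{i-1}v_i, v_{i-1}u_i` for `uv ∈ E(G)`, and `z`
is joined to all vertices of the top level `r-1`. -/
def genMycielski {V : Type*} (G : SimpleGraph V) (r : ℕ) :
    SimpleGraph (Option (V × Fin r)) :=
  SimpleGraph.fromRel (fun a b =>
    match a, b with
    | some (u, i), some (v, j) =>
        (i = j ∧ (i : ℕ) = 0 ∧ G.Adj u v) ∨ ((j : ℕ) = (i : ℕ) + 1 ∧ G.Adj u v)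
    | some (_, i), none => (i : ℕ) = r - 1
    | none, _ => False)

/-- A focal (universal) vertex: adjacent to all other vertices. -/
def IsFocal {V : Type*} (G : SimpleGraph V) (v : V) : Prop :=
  ∀ w, w ≠ v → G.Adj v w

/-- `G` with `n` additional universal vertices, i.e. the `n`-th focalization `G^{fⁿ}`. -/
def addUniversal {V : Type*} (G : SimpleGraph V) (n : ℕ) :
    SimpleGraph (V ⊕ Fin n) :=
  SimpleGraph.fromRel (fun a b =>
    match a, b with
    | Sum.inl u, Sum.inl v => G.Adj u v
    | _, _ => True)

/-- The edge clique cover number: the minimum number of cliques covering all edges. -/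
noncomputable def edgeCliqueCoverNumber {V : Type*} (G : SimpleGraph V) : ℕ :=
  sInf {k | ∃ f : Fin k → Set V, (∀ i, G.IsClique (f i)) ∧
    ∀ u v, G.Adj u v → ∃ i, u ∈ f i ∧ v ∈ f i}

/-- Disjoint union of two graphs. -/
def disjUnionGraph {α β : Type*} (G : SimpleGraph α) (H : SimpleGraph β) :
    SimpleGraph (α ⊕ β) :=
  SimpleGraph.fromRel (fun a b =>
    match a, b with
    | Sum.inl u, Sum.inl v => G.Adj u v
    | Sum.inr u, Sum.inr v => H.Adj u v
    | _, _ => False)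

/-- The complete multipartite graph with parts `V i`. -/
def completeMultipartite {ι : Type*} (V : ι → Type*) : SimpleGraph (Σ i, V i) where
  Adj a b := a.1 ≠ b.1
  symm := ⟨fun _ _ h => Ne.symm h⟩
  loopless := ⟨fun _ h => h rfl⟩

/-! In a box representation the non-adjacent pair `aᵢ, bᵢ` is separated in some coordinate,
with the interval of `aᵢ` either below or above that of `bᵢ` (both intervals are nonempty
once `n ≥ 2`, as `aᵢ` meets `bⱼ` and `bᵢ` meets `aⱼ`). Two pairs `i ≠ j` cannot be
separated in the same coordinate in the same direction: if `aᵢ < bᵢ` and `aⱼ < bⱼ` there, then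
`bⱼ` meeting `aᵢ` and `bᵢ` meeting `aⱼ` give `lo bⱼ ≤ hi aᵢ < lo bᵢ ≤ hi aⱼ < lo bⱼ`. Hence
`n ≤ 2 · box(G)`. -/

theorem exists_hasBoxRep {V : Type*} [Finite V] (G : SimpleGraph V) : ∃ k, HasBoxRep G k := by
  classical
  obtain ⟨m, ⟨e⟩⟩ := Finite.exists_equiv_fin V
  -- coordinate `e c` puts `c` at the point 0, its neighbours on [0, 1], its other vertices at 1
  refine ⟨m, fun w t => if w = e.symm t ∨ G.Adj (e.symm t) w then 0 else 1,
    fun w t => if w = e.symm t then 0 else 1, fun u v huv => ⟨fun h t => ?_, fun h => ?_⟩⟩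
  · dsimp only
    split_ifs <;> simp_all [adj_comm]
  · by_contra hn
    have := h (e u)
    norm_num [huv.symm, hn] at this

theorem lt_or_lt_of_min_lt_max {α : Type*} [LinearOrder α] {l₁ h₁ l₂ h₂ : α}
    (h₁l : l₁ ≤ h₁) (h₂l : l₂ ≤ h₂) (h : min h₁ h₂ < max l₁ l₂) : h₁ < l₂ ∨ h₂ < l₁ := by
  simp only [min_lt_iff, lt_max_iff] at h
  grind

theorem card_le_two_mul_card_of_crossing_boxes {ι κ V α : Type*} [Fintype ι] [Fintype κ]
    [LinearOrder α] (lo hi : V → κ → α) (a b : ι → V)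
    (hsep : ∀ i, ∃ t, min (hi (a i) t) (hi (b i) t) < max (lo (a i) t) (lo (b i) t))
    (hmeet : ∀ i j, i ≠ j → ∀ t, max (lo (a i) t) (lo (b j) t) ≤ min (hi (a i) t) (hi (b j) t)) :
    Fintype.card ι ≤ 2 * Fintype.card κ := by
  classical
  choose d hd using hsep
  let side : ι → κ × Bool := fun i => (d i, decide (hi (a i) (d i) < lo (b i) (d i)))
  have hside : side.Injective := by
    intro i j hside_eq
    by_contra hne
    obtain ⟨hd_eq, hbelow⟩ := Prod.ext_iff.1 hside_eq
    simp only [decide_eq_decide, side] at hd_eq hbelow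
    have hij := hmeet i j hne (d i)
    have hji := hmeet j i (Ne.symm hne) (d i)
    have hdj := hd j
    rw [← hd_eq] at hbelow hdj
    simp only [max_le_iff, le_min_iff] at hij hji
    rcases lt_or_lt_of_min_lt_max hij.1.1 hji.2.2 (hd i) with hsi | hsi <;>
      rcases lt_or_lt_of_min_lt_max hji.1.1 hij.2.2 hdj with hsj | hsj <;>
      grind
  simpa [mul_comm] using Fintype.card_le_of_injective side hside

theorem HasBoxRep.card_le_two_mul {V ι : Type*} [Fintype ι] {G : SimpleGraph V} {k : ℕ}
    (hG : HasBoxRep G k) {a b : ι → V} (hne : ∀ i j, a i ≠ b j)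
    (hnonadj : ∀ i, ¬G.Adj (a i) (b i)) (hadj : ∀ i j, i ≠ j → G.Adj (a i) (b j)) :
    Fintype.card ι ≤ 2 * k := by
  obtain ⟨lo, hi, hrep⟩ := hG
  simpa using card_le_two_mul_card_of_crossing_boxes lo hi a b
    (fun i => by simpa only [hrep _ _ (hne i i), not_forall, not_le] using hnonadj i)
    (fun i j hij => (hrep _ _ (hne i j)).1 (hadj i j hij))

theorem boxicity_ge_ceil_half_general {V : Type*} [Fintype V] (G : SimpleGraph V) (n : ℕ)
    (a b : Fin n → V)
    (hdisj : ∀ i j, a i ≠ b j)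
    (hedges : ∀ i j, Gᶜ.Adj (a i) (b j) ↔ i = j) :
    (n + 1) / 2 ≤ boxicity G := by
  have hnonadj : ∀ i, ¬G.Adj (a i) (b i) := fun i => ((compl_adj G _ _).1 ((hedges i i).2 rfl)).2
  have hadj : ∀ i j, i ≠ j → G.Adj (a i) (b j) := fun i j hij =>
    not_not.1 fun h => hij ((hedges i j).1 ((compl_adj G _ _).2 ⟨hdisj i j, h⟩))
  refine le_csInf (exists_hasBoxRep G) fun k hk => ?_
  have hcard := hk.card_le_two_mul hdisj hnonadj hadj
  rw [Fintype.card_fin] at hcard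
  omega

/-- Cozzens–Roberts: if `S₁ = {a₁,…,aₙ}` and `S₂ = {b₁,…,bₙ}` are
disjoint and the only `S₁`–`S₂` edges of `Gᶜ` are `aᵢbᵢ`, then `box(G) ≥ ⌈n/2⌉`. -/
theorem boxicity_ge_ceil_half {V : Type*} [Fintype V] (G : SimpleGraph V) (n : ℕ)
    (a b : Fin n → V) (ha : Function.Injective a) (hb : Function.Injective b)
    (hdisj : ∀ i j, a i ≠ b j)
    (hedges : ∀ i j, Gᶜ.Adj (a i) (b j) ↔ i = j) :
    (n + 1) / 2 ≤ boxicity G :=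
  boxicity_ge_ceil_half_general G n a b hdisj hedges
end

section
/- Let G be a graph with exactly l focal (universal) vertices and r ≥ 2. Then box(M_r(G)) ≥ box(G) + ⌈l/2⌉. In particular, if G has at least one focal vertex then box(M_r(G)) > box(G). -/
open SimpleGraph

/-!
Take a box representation of `M_r(G)` in `ℝ^d`. Since `v_1` and `v_2` are not adjacent, some
coordinate `k v` separates their boxes, with `v_1` on one of two sides. For a focal `w`, the
coordinate `k w` separates no non-edge `xy` of `G` on level one: the boxes of `w_1` and `w_2`
both meet those of `x_1` and `y_1`, so in that coordinate both contain the gap between them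
and would meet. Two focal `s ≠ t` cannot share coordinate and side, because `s_1 t_2` and
`t_1 s_2` are edges. So the coordinates `k w` of the `l` focal vertices are at least `⌈l/2⌉`
many, and dropping them leaves a box representation of `G` on level one.
-/

-- Both `[p, q]` and `[p', q']` contain the gap between the disjoint `[a, b]` and `[c, d]`.
lemma max_le_min_of_not_max_le_min {a b c d p q p' q' : ℝ} (hac : ¬max a c ≤ min b d)
    (hpa : max p a ≤ min q b) (hpc : max p c ≤ min q d)
    (hap' : max a p' ≤ min b q') (hcp' : max c p' ≤ min d q') : max p p' ≤ min q q' := by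
  simp only [max_le_iff, le_min_iff, not_and_or, not_le] at *
  grind

lemma lt_iff_not_lt_of_crosswise_max_le_min {a b c d a' b' c' d' : ℝ}
    (hac : ¬max a c ≤ min b d) (ha'c' : ¬max a' c' ≤ min b' d')
    (hac' : max a c' ≤ min b d') (ha'c : max a' c ≤ min b' d) : b < c ↔ ¬b' < c' := by
  simp only [max_le_iff, le_min_iff, not_and_or, not_le] at *
  grind

lemma Finset.card_le_two_mul_card_image {α β : Type*} [DecidableEq β] {s : Finset α}
    (k : α → β) (σ : α → Bool) (h : Set.InjOn (fun a => (k a, σ a)) s) :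
    s.card ≤ 2 * (s.image k).card := by
  calc s.card ≤ (s.image k ×ˢ (Finset.univ : Finset Bool)).card :=
        Finset.card_le_card_of_injOn _
          (fun a ha => Finset.mem_product.2 ⟨Finset.mem_image_of_mem k ha, Finset.mem_univ _⟩) h
    _ = 2 * (s.image k).card := by simp [mul_comm]

/-- `HasBoxRep H d` unfolds to `∃ lo hi, IsBoxRep H lo hi`. -/
def IsBoxRep {W : Type*} (H : SimpleGraph W) {d : ℕ} (lo hi : W → Fin d → ℝ) : Prop :=
  ∀ u v : W, u ≠ v → (H.Adj u v ↔ ∀ i, max (lo u i) (lo v i) ≤ min (hi u i) (hi v i))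

lemma hasBoxRep_of_finite {W : Type*} [Finite W] (H : SimpleGraph W) :
    ∃ k, HasBoxRep H k := by
  classical
  have := Fintype.ofFinite W
  -- coordinate `w` puts `w` at `1`, its neighbours on `[0, 1]` and its non-neighbours at `0`
  let e := (Fintype.equivFin W).symm
  refine ⟨Fintype.card W, fun x i => if x = e i then 1 else 0,
    fun x i => if x = e i ∨ H.Adj (e i) x then 1 else 0,
    fun u v huv => ⟨fun h i => ?_, fun h => ?_⟩⟩
  · by_cases hu : u = e i <;> by_cases hv : v = e i <;> simp_all [adj_comm, ite_nonneg]
  · by_contra hnadj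
    have := (le_min_iff.1 (max_le_iff.1 (h (e.symm u))).1).2
    norm_num [Ne.symm huv, e, hnadj] at this

lemma hasBoxRep_boxicity {W : Type*} [Finite W] (H : SimpleGraph W) :
    HasBoxRep H (boxicity H) :=
  Nat.sInf_mem (hasBoxRep_of_finite H)

lemma boxicity_le_of_hasBoxRep {W : Type*} {H : SimpleGraph W} {k : ℕ} (h : HasBoxRep H k) :
    boxicity H ≤ k :=
  Nat.sInf_le h

namespace IsBoxRep

variable {V W : Type*} {G : SimpleGraph V} {H : SimpleGraph W} {d : ℕ}
  {lo hi : W → Fin d → ℝ}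

lemma comap (hH : IsBoxRep H lo hi) (f : G ↪g H) : IsBoxRep G (lo ∘ f) (hi ∘ f) :=
  fun u v huv => f.map_adj_iff.symm.trans (hH (f u) (f v) (f.injective.ne huv))

lemma exists_not_max_le_min (hH : IsBoxRep H lo hi) {u v : W} (huv : u ≠ v) (h : ¬H.Adj u v) :
    ∃ i, ¬max (lo u i) (lo v i) ≤ min (hi u i) (hi v i) := by
  simpa [hH u v huv] using h

lemma hasBoxRep_card (hH : IsBoxRep H lo hi) (S : Finset (Fin d))
    (hS : ∀ u v, u ≠ v → ¬H.Adj u v →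
      ∃ i ∈ S, ¬max (lo u i) (lo v i) ≤ min (hi u i) (hi v i)) :
    HasBoxRep H S.card := by
  refine ⟨fun v j => lo v (S.equivFin.symm j), fun v j => hi v (S.equivFin.symm j),
    fun u v huv => ⟨fun h j => (hH u v huv).1 h _, fun h => ?_⟩⟩
  by_contra hnadj
  obtain ⟨i, hiS, hsep⟩ := hS u v huv hnadj
  exact hsep (by simpa using h (S.equivFin ⟨i, hiS⟩))

end IsBoxRep

/-- In `M_r(G)`, `f v` is `v_1` and its shadow `g v` is `v_2`. -/
structure IsShadow {V W : Type*} {G : SimpleGraph V} {H : SimpleGraph W} (f : G ↪g H)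
    (g : V → W) : Prop where
  adj : ∀ u v, G.Adj u v → H.Adj (f u) (g v)
  not_adj : ∀ v, ¬H.Adj (f v) (g v)
  ne : ∀ v, f v ≠ g v

namespace IsShadow

variable {V W : Type*} {G : SimpleGraph V} {H : SimpleGraph W} {f : G ↪g H} {g : V → W}
  {d : ℕ} {lo hi : W → Fin d → ℝ}

lemma max_le_min_of_focal (hs : IsShadow f g) (hH : IsBoxRep H lo hi) {w x y : V}
    (hw : IsFocal G w) (hxy : x ≠ y) (hnxy : ¬G.Adj x y) {i : Fin d}
    (hsep : ¬max (lo (f x) i) (lo (f y) i) ≤ min (hi (f x) i) (hi (f y) i)) :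
    max (lo (f w) i) (lo (g w) i) ≤ min (hi (f w) i) (hi (g w) i) := by
  have hwx : G.Adj w x := hw x fun h => hnxy (h ▸ hw y (h ▸ hxy).symm)
  have hwy : G.Adj w y := hw y fun h => hnxy (h ▸ (hw x (h ▸ hxy)).symm)
  have meet : ∀ {a b}, H.Adj a b → max (lo a i) (lo b i) ≤ min (hi a i) (hi b i) :=
    fun hab => (hH _ _ hab.ne).1 hab i
  exact max_le_min_of_not_max_le_min hsep (meet (f.map_rel_iff.2 hwx)) (meet (f.map_rel_iff.2 hwy))
    (meet (hs.adj _ _ hwx.symm)) (meet (hs.adj _ _ hwy.symm))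

lemma lt_iff_not_lt (hs : IsShadow f g) (hH : IsBoxRep H lo hi) {s t : V} (hst : G.Adj s t)
    {i : Fin d} (hsi : ¬max (lo (f s) i) (lo (g s) i) ≤ min (hi (f s) i) (hi (g s) i))
    (hti : ¬max (lo (f t) i) (lo (g t) i) ≤ min (hi (f t) i) (hi (g t) i)) :
    hi (f s) i < lo (g s) i ↔ ¬hi (f t) i < lo (g t) i :=
  lt_iff_not_lt_of_crosswise_max_le_min hsi hti ((hH _ _ (hs.adj _ _ hst).ne).1 (hs.adj _ _ hst) i)
    ((hH _ _ (hs.adj _ _ hst.symm).ne).1 (hs.adj _ _ hst.symm) i)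

theorem boxicity_add_le (hs : IsShadow f g) (hH : IsBoxRep H lo hi) (F : Finset V)
    (hF : ∀ v ∈ F, IsFocal G v) : boxicity G + (F.card + 1) / 2 ≤ d := by
  classical
  choose k hk using fun v => hH.exists_not_max_le_min (hs.ne v) (hs.not_adj v)
  set K := F.image k
  have hcard : F.card ≤ 2 * K.card := by
    refine Finset.card_le_two_mul_card_image k (fun v => decide (hi (f v) (k v) < lo (g v) (k v)))
      fun s hs' t _ hst => ?_
    simp only [Prod.mk.injEq, decide_eq_decide] at hst
    by_contra hne
    obtain ⟨hkst, hside⟩ := hst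
    rw [hkst] at hside
    have := hs.lt_iff_not_lt hH (hF s hs' t (Ne.symm hne)) (hkst ▸ hk s) (hk t)
    tauto
  have hsep : ∀ u v, u ≠ v → ¬G.Adj u v → ∃ i ∈ Kᶜ,
      ¬max ((lo ∘ f) u i) ((lo ∘ f) v i) ≤ min ((hi ∘ f) u i) ((hi ∘ f) v i) := by
    intro u v huv hnadj
    obtain ⟨i, huvi⟩ :=
      hH.exists_not_max_le_min (f.injective.ne huv) (f.map_adj_iff.not.2 hnadj)
    refine ⟨i, Finset.mem_compl.2 fun hiK => ?_, huvi⟩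
    obtain ⟨w, hw, rfl⟩ := Finset.mem_image.1 hiK
    exact hk w (hs.max_le_min_of_focal hH (hF w hw) huv hnadj huvi)
  have hbox : boxicity G ≤ d - K.card := by
    have := boxicity_le_of_hasBoxRep ((hH.comap f).hasBoxRep_card Kᶜ hsep)
    rwa [Finset.card_compl, Fintype.card_fin] at this
  have hKd : K.card ≤ d := by simpa using K.card_le_univ
  omega

end IsShadow

section genMycielski

variable {V : Type*} (G : SimpleGraph V) {r : ℕ}

lemma genMycielski_adj_some {u v : V} {i j : Fin r} :
    (genMycielski G r).Adj (some (u, i)) (some (v, j)) ↔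
      G.Adj u v ∧ (i = j ∧ (i : ℕ) = 0 ∨ (j : ℕ) = i + 1 ∨ (i : ℕ) = j + 1) := by
  simp only [genMycielski, fromRel_adj]
  constructor
  · rintro ⟨-, h⟩
    grind [G.adj_symm]
  · rintro ⟨h, hij⟩
    refine ⟨by simp [h.ne], ?_⟩
    grind [G.adj_symm]

/-- `v ↦ v_1`, the level `V_1` of `M_r(G)`. -/
def genMycielskiBottom (hr : 0 < r) : G ↪g genMycielski G r where
  toFun v := some (v, ⟨0, hr⟩)
  inj' := by
    intro u v h
    simpa using h
  map_rel_iff' {u v} := (genMycielski_adj_some G).trans (and_iff_left (by simp))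

@[simp]
lemma genMycielskiBottom_apply (hr : 0 < r) (v : V) :
    genMycielskiBottom G hr v = some (v, ⟨0, hr⟩) :=
  rfl

lemma isShadow_genMycielskiBottom (hr : 1 < r) :
    IsShadow (genMycielskiBottom G (by omega)) fun v => some (v, ⟨1, hr⟩) where
  adj u v h := by simp [genMycielski_adj_some, h]
  not_adj v := by simp [genMycielski_adj_some]
  ne v := by simp

end genMycielski

/-- if `G` has exactly `l` focal vertices and `r ≥ 2`, then
`box(M_r(G)) ≥ box(G) + ⌈l/2⌉`; if `l ≥ 1` then `box(M_r(G)) > box(G)`. -/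
theorem boxicity_genMycielski_ge_add_focal {V : Type*} [Fintype V]
    (G : SimpleGraph V) (r l : ℕ) (hr : 2 ≤ r)
    (hl : {v | IsFocal G v}.ncard = l) :
    boxicity G + (l + 1) / 2 ≤ boxicity (genMycielski G r) ∧
    (1 ≤ l → boxicity G < boxicity (genMycielski G r)) := by
  obtain ⟨lo, hi, hrep⟩ := hasBoxRep_boxicity (genMycielski G r)
  have key := (isShadow_genMycielskiBottom G hr).boxicity_add_le hrep
    (Set.toFinite {v | IsFocal G v}).toFinset (by simp)
  rw [← Set.ncard_eq_toFinset_card, hl] at key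
  exact ⟨key, fun h => by omega⟩
end

section
/- The Mycielski graph M_2(P_4) of the path on four vertices is not an interval graph, hence box(M_2(P_4)) ≥ 2 > 1 = box(P_4); thus there exists a graph G with no focal vertices such that box(M_2(G)) > box(G). -/
/-!
Let `v` be a vertex of `G` with distinct neighbours `u` and `w`. In `M_r(G)` with `r ≥ 2`, the
top-level copies of `u` and `w`, the copy of `v` one level below and the apex form an induced
4-cycle. Interval graphs have no induced 4-cycle: if the intervals of two opposite vertices of
the cycle are disjoint, each of the other two intervals meets both of them, hence contains the
gap between them, and so the other two meet as well. Every finite graph has a box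
representation, so a finite graph that is not an interval graph has boxicity at least 2.
-/

open SimpleGraph

variable {V : Type*} {G : SimpleGraph V}

lemma hasBoxRep_top (k : ℕ) : HasBoxRep (⊤ : SimpleGraph V) k :=
  ⟨0, 0, fun u v huv => by simp [huv]⟩

lemma hasBoxRep_zero_iff : HasBoxRep G 0 ↔ G = ⊤ := by
  refine ⟨fun ⟨lo, hi, h⟩ => ?_, fun hG => hG ▸ hasBoxRep_top 0⟩
  ext u v
  by_cases huv : u = v
  · simp [huv]
  · simp [h u v huv, huv]

-- Coordinate `x`: `x ↦ [0, 1]`, neighbours of `x ↦ [1, 3]`, all other vertices `↦ [2, 3]`.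
lemma hasBoxRep_card [Fintype V] (G : SimpleGraph V) : HasBoxRep G (Fintype.card V) := by
  classical
  let e := (Fintype.equivFin V).symm
  let lo : V → V → ℝ := fun x v => if v = x then 0 else if G.Adj x v then 1 else 2
  let hi : V → V → ℝ := fun x v => if v = x then 1 else 3
  have meet_iff : ∀ {u v : V}, u ≠ v → ∀ x,
      max (lo x u) (lo x v) ≤ min (hi x u) (hi x v) ↔
        (u = x → G.Adj u v) ∧ (v = x → G.Adj u v) := by
    intro u v huv x
    by_cases hu : u = x <;> by_cases hv : v = x <;> subst_vars
    · exact absurd rfl huv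
    all_goals simp [lo, hi, *]; split_ifs <;> simp_all [G.adj_comm] <;> norm_num
  refine ⟨fun v i => lo (e i) v, fun v i => hi (e i) v, fun u v huv => ?_⟩
  simp only [meet_iff huv]
  exact ⟨fun h _ => ⟨fun _ => h, fun _ => h⟩, fun h => (h (e.symm u)).1 (by simp)⟩

lemma boxicity_le {k : ℕ} (h : HasBoxRep G k) : boxicity G ≤ k := Nat.sInf_le h

lemma hasBoxRep_boxicity_s17 {k : ℕ} (h : HasBoxRep G k) : HasBoxRep G (boxicity G) :=
  Nat.sInf_mem (s := {k | HasBoxRep G k}) ⟨k, h⟩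

lemma IsIntervalGraph.boxicity_eq_one (hG : IsIntervalGraph G) (hne : G ≠ ⊤) :
    boxicity G = 1 := by
  have h0 : boxicity G ≠ 0 := fun h => hne (hasBoxRep_zero_iff.1 (h ▸ hasBoxRep_boxicity_s17 hG))
  have h1 := boxicity_le hG
  omega

lemma two_le_boxicity_of_not_isIntervalGraph [Fintype V] (hG : ¬ IsIntervalGraph G) :
    2 ≤ boxicity G := by
  have hbox := hasBoxRep_boxicity_s17 (hasBoxRep_card G)
  have h0 : boxicity G ≠ 0 := by
    intro h
    rw [h, hasBoxRep_zero_iff] at hbox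
    exact hG (hbox ▸ hasBoxRep_top 1)
  have h1 : boxicity G ≠ 1 := fun h => hG (by rwa [h] at hbox)
  omega

lemma isIntervalGraph_pathGraph (n : ℕ) : IsIntervalGraph (pathGraph n) := by
  refine ⟨fun v _ => v.val, fun v _ => v.val + 1, fun u v huv => ?_⟩
  simp only [pathGraph_adj, Fin.forall_fin_one, max_le_iff, le_min_iff]
  have : (u : ℕ) ≠ v := Fin.val_ne_of_ne huv
  constructor
  · rintro (h | h) <;> refine ⟨⟨?_, ?_⟩, ?_, ?_⟩ <;> norm_cast <;> omega
  · rintro ⟨⟨-, h₁⟩, h₂, -⟩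
    norm_cast at h₁ h₂
    omega

lemma chord_of_interval_cycle_four {la ha lb hb lc hc ld hd : ℝ}
    (hab : max la lb ≤ min ha hb) (hbc : max lb lc ≤ min hb hc)
    (hcd : max lc ld ≤ min hc hd) (hda : max ld la ≤ min hd ha) :
    max la lc ≤ min ha hc ∨ max lb ld ≤ min hb hd := by
  by_contra h
  simp only [max_le_iff, le_min_iff, not_or, not_and_or, not_le] at *
  rcases h with ⟨(h₁ | h₁) | h₁ | h₁, (h₂ | h₂) | h₂ | h₂⟩ <;> linarith

namespace IsIntervalGraph

theorem adj_or_adj_of_cycle_four (hG : IsIntervalGraph G) {a b c d : V}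
    (hab : G.Adj a b) (hbc : G.Adj b c) (hcd : G.Adj c d) (hda : G.Adj d a)
    (hac : a ≠ c) (hbd : b ≠ d) : G.Adj a c ∨ G.Adj b d := by
  obtain ⟨lo, hi, h⟩ := hG
  simp only [h _ _ hab.ne, h _ _ hbc.ne, h _ _ hcd.ne, h _ _ hda.ne, h _ _ hac, h _ _ hbd,
    Fin.forall_fin_one] at hab hbc hcd hda ⊢
  exact chord_of_interval_cycle_four hab hbc hcd hda

end IsIntervalGraph

theorem not_isIntervalGraph_genMycielski {u v w : V} (huv : G.Adj u v) (hvw : G.Adj v w)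
    (huw : u ≠ w) (n : ℕ) : ¬ IsIntervalGraph (genMycielski G (n + 2)) := by
  intro hM
  have := hM.adj_or_adj_of_cycle_four (a := some (u, Fin.last (n + 1)))
    (b := some (v, (Fin.last n).castSucc)) (c := some (w, Fin.last (n + 1))) (d := none)
  simp [genMycielski, huv, hvw, huv.symm, hvw.symm, huw,
    (Fin.castSucc_lt_last (Fin.last n)).ne'] at this

lemma pathGraph_four_ne_top : pathGraph 4 ≠ ⊤ := by
  intro h
  have : (pathGraph 4).Adj 0 2 := h ▸ (by decide : (0 : Fin 4) ≠ 2)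
  simp [pathGraph_adj] at this

lemma pathGraph_four_not_isFocal (v : Fin 4) : ¬ IsFocal (pathGraph 4) v := by
  revert v
  simp only [IsFocal, pathGraph_adj]
  decide

/-- `M₂(P₄)` is not an interval graph, hence `box(M₂(P₄)) ≥ 2 > 1 = box(P₄)`;
thus there is a graph with no focal vertices whose Mycielski graph has strictly
larger boxicity. -/
theorem mycielski_P4_not_interval :
    ¬ IsIntervalGraph (genMycielski (SimpleGraph.pathGraph 4) 2) ∧
    2 ≤ boxicity (genMycielski (SimpleGraph.pathGraph 4) 2) ∧
    boxicity (SimpleGraph.pathGraph 4) = 1 ∧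
    ∃ (V : Type) (_ : Fintype V) (G : SimpleGraph V),
      (∀ v, ¬ IsFocal G v) ∧ boxicity G < boxicity (genMycielski G 2) := by
  have hM : ¬ IsIntervalGraph (genMycielski (pathGraph 4) 2) :=
    not_isIntervalGraph_genMycielski (u := 0) (v := 1) (w := 2)
      (by simp [pathGraph_adj]) (by simp [pathGraph_adj]) (by decide) 0
  have hM2 : 2 ≤ boxicity (genMycielski (pathGraph 4) 2) :=
    two_le_boxicity_of_not_isIntervalGraph hM
  have hP : boxicity (pathGraph 4) = 1 :=
    (isIntervalGraph_pathGraph 4).boxicity_eq_one pathGraph_four_ne_top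
  exact ⟨hM, hM2, hP, Fin 4, inferInstance, pathGraph 4, pathGraph_four_not_isFocal, by omega⟩
end
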